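/- In the Coxeter group W' of type B̃₂ with simple reflections r, s, t (rt = tr, (rs)⁴ = (st)⁴ = e), the element x₁ = stsr has length 4 and satisfies l(x₁^n) = 4n for all n ≥ 0. -/

import Mathlib

/-- The Coxeter matrix of affine type B̃₂ on generators `r = 0`, `s = 1`, `t = 2`,
with `m(r,t) = 2`, `m(r,s) = 4`, `m(s,t) = 4`. -/
def B2affMatrix : CoxeterMatrix (Fin 3) where
  M := !![1, 4, 2; 4, 1, 4; 2, 4, 1]
  off_diagonal := by
    intro i i' h
    fin_cases i <;> fin_cases i' <;> simp_all

/-- The affine Weyl group of type B̃₂. -/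
abbrev B2affGroup := B2affMatrix.Group

/-- The canonical Coxeter system on the affine Weyl group of type B̃₂. -/
def B2affCS : CoxeterSystem B2affMatrix B2affGroup := B2affMatrix.toCoxeterSystem

namespace B2aff

/-- The simple reflection `r`. -/
def r : B2affGroup := B2affCS.simple 0
/-- The simple reflection `s`. -/
def s : B2affGroup := B2affCS.simple 1
/-- The simple reflection `t`. -/
def t : B2affGroup := B2affCS.simple 2

end B2aff

/-!
Let `W'` act on the alcoves of the affine plane arrangement of type `B̃₂`, an alcove being
recorded by integer coordinates. Every simple reflection moves an alcove across exactly one wall,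
so the number of walls separating `w A₀` from the fundamental alcove `A₀` is at most `ℓ(w)`.
The element `x₁ = stsr` acts as a translation crossing four walls at a time, so `x₁ⁿ A₀` is
separated from `A₀` by `4n` walls, which matches the obvious bound `ℓ(x₁ⁿ) ≤ n ℓ(x₁) ≤ 4n`.
-/

namespace CoxeterSystem

variable {B W : Type*} [Group W] {M : CoxeterMatrix B} (cs : CoxeterSystem M W)

theorem length_pow_le (w : W) (n : ℕ) : cs.length (w ^ n) ≤ n * cs.length w := by
  induction n with
  | zero => simp
  | succ n ih =>
    calc cs.length (w ^ (n + 1)) ≤ cs.length (w ^ n) + cs.length w :=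
          pow_succ w n ▸ cs.length_mul_le _ _
      _ ≤ n * cs.length w + cs.length w := Nat.add_le_add_right ih _
      _ = (n + 1) * cs.length w := (Nat.succ_mul n _).symm

theorem apply_le_add_length_of_simple {X : Type*} (φ : W →* Equiv.Perm X) (N : X → ℕ)
    (hN : ∀ i x, N (φ (cs.simple i) x) ≤ N x + 1) (w : W) (x : X) :
    N (φ w x) ≤ N x + cs.length w := by
  have hword : ∀ ω : List B, N (φ (cs.wordProd ω) x) ≤ N x + ω.length := by
    intro ω
    induction ω with
    | nil => simp
    | cons i ω ih =>
      rw [wordProd_cons, map_mul, Equiv.Perm.mul_apply, List.length_cons]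
      exact (hN i _).trans (by omega)
  obtain ⟨ω, hω, rfl⟩ := cs.exists_isReduced w
  rw [hω.eq]
  exact hword ω

end CoxeterSystem

namespace B2aff

/- In the realisation of `B̃₂` on `ℚ²` with walls `x ∈ ℤ`, `y ∈ ℤ`, `x + y ∈ 2ℤ`, `x - y ∈ 2ℤ`
and `r, s, t` the reflections in `x = 1`, `x = y`, `y = 0`, an alcove is recorded by the integer
parts of `x`, `y`, `(x + y) / 2`, `(x - y) / 2` at any of its interior points; the fundamental
alcove gets `0`, and the `ℓ¹`-norm of the coordinates counts the walls separating an alcove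
from it. -/
abbrev Alcove := ℤ × ℤ × ℤ × ℤ

def alcoveR : Equiv.Perm Alcove :=
  Function.Involutive.toPerm (fun v ↦ (1 - v.1, v.2.1, -v.2.2.2, -v.2.2.1)) fun v ↦ by simp

def alcoveS : Equiv.Perm Alcove :=
  Function.Involutive.toPerm (fun v ↦ (v.2.1, v.1, v.2.2.1, -v.2.2.2 - 1)) fun v ↦ by simp

def alcoveT : Equiv.Perm Alcove :=
  Function.Involutive.toPerm (fun v ↦ (v.1, -v.2.1 - 1, v.2.2.2, v.2.2.1)) fun v ↦ by simp

@[simp] lemma alcoveR_apply (a b c d : ℤ) : alcoveR (a, b, c, d) = (1 - a, b, -d, -c) := rfl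
@[simp] lemma alcoveS_apply (a b c d : ℤ) : alcoveS (a, b, c, d) = (b, a, c, -d - 1) := rfl
@[simp] lemma alcoveT_apply (a b c d : ℤ) : alcoveT (a, b, c, d) = (a, -b - 1, d, c) := rfl

def alcoveRefl : Fin 3 → Equiv.Perm Alcove := ![alcoveR, alcoveS, alcoveT]

lemma isLiftable_alcoveRefl : B2affMatrix.IsLiftable alcoveRefl := by
  intro i j
  fin_cases i <;> fin_cases j <;> ext ⟨a, b, c, d⟩ <;>
    simp [B2affMatrix, alcoveRefl, pow_succ, Equiv.Perm.mul_apply]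

noncomputable def alcoveAction : B2affGroup →* Equiv.Perm Alcove :=
  B2affCS.lift ⟨alcoveRefl, isLiftable_alcoveRefl⟩

lemma alcoveAction_simple (i : Fin 3) : alcoveAction (B2affCS.simple i) = alcoveRefl i :=
  B2affCS.lift_apply_simple isLiftable_alcoveRefl i

def wallCount (v : Alcove) : ℕ := v.1.natAbs + v.2.1.natAbs + v.2.2.1.natAbs + v.2.2.2.natAbs

lemma wallCount_alcoveAction_simple_le (i : Fin 3) (v : Alcove) :
    wallCount (alcoveAction (B2affCS.simple i) v) ≤ wallCount v + 1 := by
  obtain ⟨a, b, c, d⟩ := v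
  rw [alcoveAction_simple]
  fin_cases i <;>
    simp only [wallCount, alcoveRefl, Fin.zero_eta, Fin.mk_one, Fin.reduceFinMk, Fin.isValue,
      Matrix.cons_val_zero, Matrix.cons_val_one, Matrix.cons_val, alcoveR_apply, alcoveS_apply,
      alcoveT_apply] <;>
    omega

lemma alcoveAction_stsr (v : Alcove) : alcoveAction (s * t * s * r) v = v + (-2, 0, -1, -1) := by
  obtain ⟨a, b, c, d⟩ := v
  simp only [map_mul, Equiv.Perm.mul_apply, r, s, t, alcoveAction_simple]
  simp only [alcoveRefl, Fin.isValue, Matrix.cons_val_zero, Matrix.cons_val_one, Matrix.cons_val,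
    alcoveR_apply, alcoveS_apply, alcoveT_apply, Prod.mk_add_mk, Prod.mk.injEq]
  omega

lemma alcoveAction_stsr_pow (n : ℕ) :
    alcoveAction ((s * t * s * r) ^ n) 0 = (-2 * (n : ℤ), 0, -(n : ℤ), -(n : ℤ)) := by
  induction n with
  | zero => rfl
  | succ n ih =>
    rw [pow_succ', map_mul, Equiv.Perm.mul_apply, ih, alcoveAction_stsr]
    simp only [Prod.mk_add_mk, Nat.cast_succ, Prod.mk.injEq]
    omega

lemma wallCount_alcoveAction_stsr_pow (n : ℕ) :
    wallCount (alcoveAction ((s * t * s * r) ^ n) 0) = 4 * n := by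
  rw [alcoveAction_stsr_pow]
  simp only [wallCount]
  omega

lemma length_stsr_le : B2affCS.length (s * t * s * r) ≤ 4 := by
  have : s * t * s * r = B2affCS.wordProd [1, 2, 1, 0] := by
    simp [CoxeterSystem.wordProd_cons, r, s, t, mul_assoc]
  rw [this]
  exact B2affCS.length_wordProd_le _

end B2aff

open B2aff in
/-- In the affine Weyl group of type B̃₂, the element `x₁ = stsr` has length 4,
and `l(x₁^n) = 4n` for all `n ≥ 0`. -/
theorem length_stsr_pow :
    B2affCS.length (s * t * s * r) = 4 ∧
    ∀ n : ℕ, B2affCS.length ((s * t * s * r) ^ n) = 4 * n := by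
  have key (n : ℕ) : B2affCS.length ((s * t * s * r) ^ n) = 4 * n := by
    refine le_antisymm ?_ ?_
    · calc B2affCS.length ((s * t * s * r) ^ n) ≤ n * B2affCS.length (s * t * s * r) :=
            B2affCS.length_pow_le _ n
        _ ≤ 4 * n := by rw [mul_comm]; exact Nat.mul_le_mul_right n length_stsr_le
    · have := B2affCS.apply_le_add_length_of_simple alcoveAction wallCount
        wallCount_alcoveAction_simple_le ((s * t * s * r) ^ n) 0
      rwa [wallCount_alcoveAction_stsr_pow, show wallCount 0 = 0 from rfl, zero_add] at this
  exact ⟨by simpa using key 1, key⟩
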